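/- For n ≥ 2, the upper rank of A^+(B_n) satisfies r4(A^+(B_n)) ≥ n!·⌊n²/4⌋ + n + 2; explicitly, given a partition {I, J} of [n] with |I| = ⌈n/2⌉ and |J| = ⌊n/2⌋, the set {(i,i;id) : i ∈ [n]} ∪ {(i,j;σ) : i ∈ I, j ∈ J, σ ∈ S_n} ∪ {ξ_{(1,1)}, ((1,1)→(1,1))} is an independent subset of A^+(B_n) of that cardinality. -/

import Mathlib

def Bn (n : ℕ) : Type := Option (Fin n × Fin n)

def Bn.mul {n : ℕ} : Bn n → Bn n → Bn n
  | some (i, j), some (k, l) => if j = k then some (i, l) else none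
  | _, _ => none

instance (n : ℕ) : Mul (Bn n) := ⟨Bn.mul⟩

instance (n : ℕ) : Semigroup (Bn n) where
  mul_assoc a b c := by
    show Bn.mul (Bn.mul a b) c = Bn.mul a (Bn.mul b c)
    rcases a with _ | ⟨i, j⟩ <;> rcases b with _ | ⟨k, l⟩ <;> rcases c with _ | ⟨p, q⟩ <;>
      try rfl
    · by_cases h1 : j = k
      · rw [show Bn.mul (some (i, j)) (some (k, l)) = some (i, l) from if_pos h1]; rfl
      · rw [show Bn.mul (some (i, j)) (some (k, l)) = none from if_neg h1]; rfl
    · by_cases h2 : l = p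
      · rw [show Bn.mul (some (k, l)) (some (p, q)) = some (k, q) from if_pos h2]
        by_cases h1 : j = k
        · rw [show Bn.mul (some (i, j)) (some (k, l)) = some (i, l) from if_pos h1]
          exact (if_pos h2).trans (if_pos h1).symm
        · rw [show Bn.mul (some (i, j)) (some (k, l)) = none from if_neg h1]
          exact (if_neg h1).symm
      · rw [show Bn.mul (some (k, l)) (some (p, q)) = none from if_neg h2]
        by_cases h1 : j = k
        · rw [show Bn.mul (some (i, j)) (some (k, l)) = some (i, l) from if_pos h1]
          exact if_neg h2
        · rw [show Bn.mul (some (i, j)) (some (k, l)) = none from if_neg h1]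
          rfl

/-- Maps on `Bn n`, composed left-to-right: `x (f * g) = (x f) g`. -/
def MapBn (n : ℕ) : Type := Bn n → Bn n

instance (n : ℕ) : Monoid (MapBn n) where
  mul f g := fun x => g (f x)
  one := fun x => x
  mul_assoc _ _ _ := rfl
  one_mul _ := rfl
  mul_one _ := rfl

/-- The constant map `ξ_c`. -/
def constMap (n : ℕ) (c : Bn n) : MapBn n := fun _ => c

/-- The `n`-support map `(p, q; σ)`, sending `(i, p) ↦ (iσ, q)` and all else to `θ`. -/
def nSuppMap (n : ℕ) (p q : Fin n) (σ : Equiv.Perm (Fin n)) : MapBn n :=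
  fun x =>
    match x with
    | some (i, j) => if j = p then some (σ i, q) else none
    | none => none

instance (n : ℕ) : DecidableEq (Bn n) :=
  inferInstanceAs (DecidableEq (Option (Fin n × Fin n)))

/-- The singleton-support map `((k,l) → (p,q))`. -/
def sglMap (n : ℕ) (k l p q : Fin n) : MapBn n :=
  fun x => @ite _ (x = some (k, l)) (instDecidableEqBn n x (some (k, l))) (some (p, q)) none

/-- The multiplicative semigroup reduct `A⁺(Bₙ)`, as a set of maps on `Bn n`. -/
def APlus (n : ℕ) : Set (MapBn n) :=
  {f | (∃ c, f = constMap n c) ∨ (∃ p q σ, f = nSuppMap n p q σ) ∨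
       (∃ k l p q, f = sglMap n k l p q)}

/-- Independence of a subset of a semigroup. -/
def IndependentIn {S : Type*} [Semigroup S] (U : Set S) : Prop :=
  ∀ a ∈ U, a ∉ Subsemigroup.closure (U \ {a})

/-!
Each element `a` of the witness set lies outside a subsemigroup of maps containing all the other
elements, so `a` is not generated by them: for `ξ_(1,1)` the maps fixing `θ`; for
`((1,1) → (1,1))` the constant and `n`-support maps; for an `n`-support map `a`, the constant
maps, the singleton-support maps and the `n`-support maps `(p, q; σ) ≠ a` with `p = q, σ = id` or
`p ∈ I, q ∈ J`. The last set is closed under composition because `I ∩ J = ∅`: of two composable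
such triples one is an identity `(p, p; id)`, so their product is the other one. An `n`-support
map determines its triple, which gives the count `n + |I| |J| n! + 2`.
-/

section MapBn

variable {n : ℕ}

instance : Finite (MapBn n) :=
  inferInstanceAs (Finite (Option (Fin n × Fin n) → Option (Fin n × Fin n)))

@[simp] lemma nSuppMap_none (p q : Fin n) (σ : Equiv.Perm (Fin n)) :
    nSuppMap n p q σ none = none := rfl

@[simp] lemma nSuppMap_some (p q i j : Fin n) (σ : Equiv.Perm (Fin n)) :
    nSuppMap n p q σ (some (i, j)) = if j = p then some (σ i, q) else none := rfl

@[simp] lemma sglMap_none (k l p q : Fin n) : sglMap n k l p q none = none := rfl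

@[simp] lemma sglMap_some (k l p q i j : Fin n) :
    sglMap n k l p q (some (i, j)) = if i = k ∧ j = l then some (p, q) else none :=
  @if_congr _ _ _ (instDecidableEqBn n _ _) _ _ _ _ _ (Option.some_inj.trans Prod.mk_inj) rfl rfl

lemma constMap_mul (c : Bn n) (f : MapBn n) : constMap n c * f = constMap n (f c) := rfl

lemma mul_constMap (f : MapBn n) (c : Bn n) : f * constMap n c = constMap n c := rfl

lemma nSuppMap_mul_nSuppMap (p q p' q' : Fin n) (σ σ' : Equiv.Perm (Fin n)) :
    nSuppMap n p q σ * nSuppMap n p' q' σ' =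
      if q = p' then nSuppMap n p q' (σ.trans σ') else constMap n none := by
  split_ifs with h <;> funext x <;> change nSuppMap n p' q' σ' (nSuppMap n p q σ x) = _ <;>
    rcases x with _ | ⟨i, j⟩
  all_goals first | rfl | (by_cases hj : j = p <;> simp [hj, h] <;> rfl)

lemma sglMap_mul_sglMap (k l p q k' l' p' q' : Fin n) :
    sglMap n k l p q * sglMap n k' l' p' q' =
      if p = k' ∧ q = l' then sglMap n k l p' q' else constMap n none := by
  split_ifs with h <;> funext x <;> change sglMap n k' l' p' q' (sglMap n k l p q x) = _ <;>
    rcases x with _ | ⟨i, j⟩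
  all_goals first | rfl | (by_cases hij : i = k ∧ j = l <;> simp [hij, h] <;> rfl)

lemma sglMap_mul_nSuppMap (k l p q p' q' : Fin n) (σ : Equiv.Perm (Fin n)) :
    sglMap n k l p q * nSuppMap n p' q' σ =
      if q = p' then sglMap n k l (σ p) q' else constMap n none := by
  split_ifs with h <;> funext x <;> change nSuppMap n p' q' σ (sglMap n k l p q x) = _ <;>
    rcases x with _ | ⟨i, j⟩
  all_goals first | rfl | (by_cases hij : i = k ∧ j = l <;> simp [hij, h] <;> rfl)

lemma nSuppMap_mul_sglMap (p q k l p' q' : Fin n) (σ : Equiv.Perm (Fin n)) :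
    nSuppMap n p q σ * sglMap n k l p' q' =
      if q = l then sglMap n (σ.symm k) p p' q' else constMap n none := by
  split_ifs with h <;> funext x <;> change sglMap n k l p' q' (nSuppMap n p q σ x) = _ <;>
    rcases x with _ | ⟨i, j⟩
  all_goals first | rfl | (by_cases hj : j = p <;> simp [hj, h, Equiv.eq_symm_apply] <;> rfl)

lemma nSuppMap_ne_constMap (p q : Fin n) (σ : Equiv.Perm (Fin n)) (c : Bn n) :
    nSuppMap n p q σ ≠ constMap n c := by
  intro h
  have h₀ : nSuppMap n p q σ none = c := congrArg (fun f : MapBn n => f none) h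
  have h₁ : nSuppMap n p q σ (some (p, p)) = c := congrArg (fun f : MapBn n => f (some (p, p))) h
  simp only [nSuppMap_none, nSuppMap_some, if_true] at h₀ h₁
  exact Option.some_ne_none _ (h₁.trans h₀.symm)

lemma sglMap_ne_constMap (k l p q : Fin n) (c : Bn n) : sglMap n k l p q ≠ constMap n c := by
  intro h
  have h₀ : sglMap n k l p q none = c := congrArg (fun f : MapBn n => f none) h
  have h₁ : sglMap n k l p q (some (k, l)) = c := congrArg (fun f : MapBn n => f (some (k, l))) h
  simp only [sglMap_none, sglMap_some, and_self, if_true] at h₀ h₁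
  exact Option.some_ne_none _ (h₁.trans h₀.symm)

lemma nSuppMap_ne_sglMap [Nontrivial (Fin n)] (p q k l p' q' : Fin n) (σ : Equiv.Perm (Fin n)) :
    nSuppMap n p q σ ≠ sglMap n k l p' q' := by
  intro h
  obtain ⟨a, b, hab⟩ := exists_pair_ne (Fin n)
  have hsupp : ∀ i, (i = k ∧ p = l) := fun i => by
    have hi := congrArg (fun f : MapBn n => f (some (i, p))) h
    simp only [nSuppMap_some, sglMap_some, if_true] at hi
    by_contra hne
    rw [if_neg hne] at hi
    exact Option.some_ne_none _ hi
  exact hab ((hsupp a).1.trans (hsupp b).1.symm)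

lemma nSuppMap_inj {p q p' q' : Fin n} {σ σ' : Equiv.Perm (Fin n)} :
    nSuppMap n p q σ = nSuppMap n p' q' σ' ↔ p = p' ∧ q = q' ∧ σ = σ' := by
  refine ⟨fun h => ?_, by rintro ⟨rfl, rfl, rfl⟩; rfl⟩
  have hat : ∀ i, some (σ i, q) = if p = p' then some (σ' i, q') else none := fun i => by
    have hi := congrArg (fun f : MapBn n => f (some (i, p))) h
    simp only [nSuppMap_some, if_true] at hi
    exact hi
  have hp : p = p' := by
    by_contra hp
    simpa [hp] using hat p
  simp only [hp, if_true, Option.some_inj, Prod.mk.injEq] at hat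
  exact ⟨hp, (hat p).2, Equiv.ext (fun i => (hat i).1)⟩

end MapBn

section Subsemigroups

variable (n : ℕ)

def thetaFixing : Subsemigroup (MapBn n) where
  carrier := {f | f none = none}
  mul_mem' {_ g} hf hg := (congrArg g hf).trans hg

def constOrNSupp : Subsemigroup (MapBn n) where
  carrier := {f | (∃ c, f = constMap n c) ∨ ∃ p q σ, f = nSuppMap n p q σ}
  mul_mem' := by
    rintro _ g (⟨c, rfl⟩ | ⟨p, q, σ, rfl⟩) hg
    · exact Or.inl ⟨_, constMap_mul c g⟩
    obtain ⟨c, rfl⟩ | ⟨p', q', σ', rfl⟩ := hg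
    · exact Or.inl ⟨c, mul_constMap _ c⟩
    rw [nSuppMap_mul_nSuppMap]
    split_ifs
    exacts [Or.inr ⟨_, _, _, rfl⟩, Or.inl ⟨_, rfl⟩]

variable {n}

def constSglNSupp (T : Fin n → Fin n → Equiv.Perm (Fin n) → Prop)
    (hT : ∀ {p q r σ τ}, T p q σ → T q r τ → T p r (σ.trans τ)) : Subsemigroup (MapBn n) where
  carrier := {f | (∃ c, f = constMap n c) ∨ (∃ k l p q, f = sglMap n k l p q) ∨
    ∃ p q σ, T p q σ ∧ f = nSuppMap n p q σ}
  mul_mem' := by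
    rintro _ g (⟨c, rfl⟩ | ⟨k, l, p, q, rfl⟩ | ⟨p, q, σ, hpq, rfl⟩) hg
    · exact Or.inl ⟨_, constMap_mul c g⟩
    all_goals obtain ⟨c, rfl⟩ | ⟨k', l', p', q', rfl⟩ | ⟨p', q', σ', hpq', rfl⟩ := hg
    · exact Or.inl ⟨c, mul_constMap _ c⟩
    · rw [sglMap_mul_sglMap]
      split_ifs
      exacts [Or.inr (Or.inl ⟨_, _, _, _, rfl⟩), Or.inl ⟨_, rfl⟩]
    · rw [sglMap_mul_nSuppMap]
      split_ifs
      exacts [Or.inr (Or.inl ⟨_, _, _, _, rfl⟩), Or.inl ⟨_, rfl⟩]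
    · exact Or.inl ⟨c, mul_constMap _ c⟩
    · rw [nSuppMap_mul_sglMap]
      split_ifs
      exacts [Or.inr (Or.inl ⟨_, _, _, _, rfl⟩), Or.inl ⟨_, rfl⟩]
    · rw [nSuppMap_mul_nSuppMap]
      split_ifs with h
      · subst h
        exact Or.inr (Or.inr ⟨_, _, _, hT hpq hpq', rfl⟩)
      · exact Or.inl ⟨_, rfl⟩

end Subsemigroups

section Witness

def rankWitness (n : ℕ) [NeZero n] (I J : Set (Fin n)) : Set (MapBn n) :=
  {f | ∃ i : Fin n, f = nSuppMap n i i 1} ∪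
    {f | ∃ i ∈ I, ∃ j ∈ J, ∃ σ : Equiv.Perm (Fin n), f = nSuppMap n i j σ} ∪
    {constMap n (some (0, 0)), sglMap n 0 0 0 0}

variable {n : ℕ}

def IsWitnessTriple (I J : Set (Fin n)) (p q : Fin n) (σ : Equiv.Perm (Fin n)) : Prop :=
  (p = q ∧ σ = 1) ∨ (p ∈ I ∧ q ∈ J)

lemma IsWitnessTriple.trans_eq_or {I J : Set (Fin n)} (hIJ : Disjoint I J) {p q r : Fin n}
    {σ τ : Equiv.Perm (Fin n)} (h : IsWitnessTriple I J p q σ) (h' : IsWitnessTriple I J q r τ) :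
    (q = r ∧ σ.trans τ = σ) ∨ (p = q ∧ σ.trans τ = τ) := by
  rcases h with ⟨rfl, rfl⟩ | ⟨-, hq⟩
  · exact Or.inr ⟨rfl, Equiv.refl_trans τ⟩
  rcases h' with ⟨rfl, rfl⟩ | ⟨hq', -⟩
  · exact Or.inl ⟨rfl, Equiv.trans_refl σ⟩
  · exact absurd hq (hIJ.notMem_of_mem_left hq')

variable [NeZero n] {I J : Set (Fin n)}

lemma nSuppMap_notMem_closure_rankWitness [Nontrivial (Fin n)] (hIJ : Disjoint I J)
    (p₀ q₀ : Fin n) (σ₀ : Equiv.Perm (Fin n)) :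
    nSuppMap n p₀ q₀ σ₀ ∉ Subsemigroup.closure (rankWitness n I J \ {nSuppMap n p₀ q₀ σ₀}) := by
  let T p q σ := IsWitnessTriple I J p q σ ∧ nSuppMap n p q σ ≠ nSuppMap n p₀ q₀ σ₀
  have hT {p q r σ τ} (h : T p q σ) (h' : T q r τ) : T p r (σ.trans τ) := by
    rcases h.1.trans_eq_or hIJ h'.1 with ⟨rfl, hστ⟩ | ⟨rfl, hστ⟩ <;> rw [hστ]
    exacts [h, h']
  have hsub : rankWitness n I J \ {nSuppMap n p₀ q₀ σ₀} ⊆ constSglNSupp T hT := by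
    rintro f ⟨(⟨i, rfl⟩ | ⟨i, hi, j, hj, σ, rfl⟩) | (rfl | rfl), hf⟩
    · exact Or.inr (Or.inr ⟨i, i, 1, ⟨Or.inl ⟨rfl, rfl⟩, hf⟩, rfl⟩)
    · exact Or.inr (Or.inr ⟨i, j, σ, ⟨Or.inr ⟨hi, hj⟩, hf⟩, rfl⟩)
    · exact Or.inl ⟨_, rfl⟩
    · exact Or.inr (Or.inl ⟨_, _, _, _, rfl⟩)
  intro hmem
  rcases Subsemigroup.closure_le.2 hsub hmem with ⟨c, hc⟩ | ⟨k, l, p, q, hc⟩ | ⟨p, q, σ, hpq, hc⟩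
  · exact nSuppMap_ne_constMap _ _ _ _ hc
  · exact nSuppMap_ne_sglMap _ _ _ _ _ _ _ hc
  · exact hpq.2 hc.symm

lemma constMap_notMem_closure_rankWitness :
    constMap n (some (0, 0)) ∉
      Subsemigroup.closure (rankWitness n I J \ {constMap n (some (0, 0))}) := by
  have hsub : rankWitness n I J \ {constMap n (some (0, 0))} ⊆ thetaFixing n := by
    rintro f ⟨(⟨i, rfl⟩ | ⟨i, -, j, -, σ, rfl⟩) | (rfl | rfl), hf⟩
    exacts [rfl, rfl, absurd rfl hf, rfl]
  exact fun hmem => Option.some_ne_none _ (Subsemigroup.closure_le.2 hsub hmem)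

lemma sglMap_notMem_closure_rankWitness [Nontrivial (Fin n)] :
    sglMap n 0 0 0 0 ∉ Subsemigroup.closure (rankWitness n I J \ {sglMap n 0 0 0 0}) := by
  have hsub : rankWitness n I J \ {sglMap n 0 0 0 0} ⊆ constOrNSupp n := by
    rintro f ⟨(⟨i, rfl⟩ | ⟨i, -, j, -, σ, rfl⟩) | (rfl | rfl), hf⟩
    exacts [Or.inr ⟨_, _, _, rfl⟩, Or.inr ⟨_, _, _, rfl⟩, Or.inl ⟨_, rfl⟩, absurd rfl hf]
  intro hmem
  rcases Subsemigroup.closure_le.2 hsub hmem with ⟨c, hc⟩ | ⟨p, q, σ, hc⟩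
  · exact sglMap_ne_constMap _ _ _ _ _ hc
  · exact nSuppMap_ne_sglMap _ _ _ _ _ _ _ hc.symm

lemma independentIn_rankWitness [Nontrivial (Fin n)] (hIJ : Disjoint I J) :
    IndependentIn (rankWitness n I J) := by
  rintro a ((⟨i, rfl⟩ | ⟨i, -, j, -, σ, rfl⟩) | (rfl | rfl))
  · exact nSuppMap_notMem_closure_rankWitness hIJ _ _ _
  · exact nSuppMap_notMem_closure_rankWitness hIJ _ _ _
  · exact constMap_notMem_closure_rankWitness
  · exact sglMap_notMem_closure_rankWitness

end Witness

theorem Nat.add_one_div_two_mul_div_two (n : ℕ) : (n + 1) / 2 * (n / 2) = n ^ 2 / 4 := by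
  obtain ⟨m, rfl | rfl⟩ := Nat.even_or_odd' n
  · rw [show (2 * m + 1) / 2 = m by omega, show 2 * m / 2 = m by omega,
      show (2 * m) ^ 2 = m * m * 4 by ring, Nat.mul_div_cancel _ four_pos]
  · rw [show (2 * m + 1 + 1) / 2 = m + 1 by omega, show (2 * m + 1) / 2 = m by omega,
      show (2 * m + 1) ^ 2 = 1 + (m + 1) * m * 4 by ring, Nat.add_mul_div_right _ _ four_pos]
    omega

section Card

variable {n : ℕ}

lemma nSuppMap_uncurry_injective :
    Function.Injective fun t : Fin n × Fin n × Equiv.Perm (Fin n) => nSuppMap n t.1 t.2.1 t.2.2 :=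
  fun _ _ h => by simpa only [Prod.ext_iff] using nSuppMap_inj.1 h

lemma ncard_diagonal_nSuppMap : {f | ∃ i : Fin n, f = nSuppMap n i i 1}.ncard = n := by
  have hinj : Function.Injective fun i : Fin n => nSuppMap n i i 1 :=
    fun _ _ h => (nSuppMap_inj.1 h).1
  have hrange : {f | ∃ i : Fin n, f = nSuppMap n i i 1} = Set.range fun i => nSuppMap n i i 1 :=
    Set.ext fun _ => exists_congr fun _ => eq_comm
  rw [hrange, Set.ncard_range_of_injective hinj, Nat.card_fin]

lemma ncard_nSuppMap_prod (I J : Set (Fin n)) :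
    {f | ∃ i ∈ I, ∃ j ∈ J, ∃ σ : Equiv.Perm (Fin n), f = nSuppMap n i j σ}.ncard =
      I.ncard * J.ncard * n.factorial := by
  have himage : {f | ∃ i ∈ I, ∃ j ∈ J, ∃ σ : Equiv.Perm (Fin n), f = nSuppMap n i j σ} =
      (fun t : Fin n × Fin n × Equiv.Perm (Fin n) => nSuppMap n t.1 t.2.1 t.2.2) ''
        (I ×ˢ J ×ˢ Set.univ) := by
    ext f
    simp only [Set.mem_ofPred_eq, Set.mem_image, Set.mem_prod, Set.mem_univ, and_true,
      Prod.exists]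
    exact ⟨fun ⟨i, hi, j, hj, σ, hf⟩ => ⟨i, j, σ, ⟨hi, hj⟩, hf.symm⟩,
      fun ⟨i, j, σ, ⟨hi, hj⟩, hf⟩ => ⟨i, hi, j, hj, σ, hf.symm⟩⟩
  rw [himage, Set.ncard_image_of_injective _ nSuppMap_uncurry_injective, Set.ncard_prod,
    Set.ncard_prod, Set.ncard_univ, Nat.card_perm, Nat.card_fin, mul_assoc]

variable [NeZero n] {I J : Set (Fin n)}

lemma ncard_rankWitness [Nontrivial (Fin n)] (hIJ : Disjoint I J) :
    (rankWitness n I J).ncard = n + I.ncard * J.ncard * n.factorial + 2 := by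
  have hdiag : Disjoint {f | ∃ i : Fin n, f = nSuppMap n i i 1}
      {f | ∃ i ∈ I, ∃ j ∈ J, ∃ σ : Equiv.Perm (Fin n), f = nSuppMap n i j σ} := by
    rw [Set.disjoint_left]
    rintro f ⟨i, rfl⟩ ⟨i', hi', j', hj', σ', hf⟩
    obtain ⟨rfl, rfl, -⟩ := nSuppMap_inj.1 hf
    exact hIJ.notMem_of_mem_left hi' hj'
  have hrest : Disjoint ({f | ∃ i : Fin n, f = nSuppMap n i i 1} ∪
      {f | ∃ i ∈ I, ∃ j ∈ J, ∃ σ : Equiv.Perm (Fin n), f = nSuppMap n i j σ})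
      {constMap n (some (0, 0)), sglMap n 0 0 0 0} := by
    rw [Set.disjoint_right]
    rintro f (rfl | rfl) (⟨i, hf⟩ | ⟨i, -, j, -, σ, hf⟩)
    exacts [nSuppMap_ne_constMap _ _ _ _ hf.symm, nSuppMap_ne_constMap _ _ _ _ hf.symm,
      nSuppMap_ne_sglMap _ _ _ _ _ _ _ hf.symm, nSuppMap_ne_sglMap _ _ _ _ _ _ _ hf.symm]
  rw [rankWitness, Set.ncard_union_eq hrest, Set.ncard_union_eq hdiag, ncard_diagonal_nSuppMap,
    ncard_nSuppMap_prod]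
  exact congrArg _ (Set.ncard_pair (sglMap_ne_constMap _ _ _ _ _).symm)

lemma rankWitness_subset_APlus : rankWitness n I J ⊆ APlus n := by
  rintro f ((⟨i, rfl⟩ | ⟨i, -, j, -, σ, rfl⟩) | (rfl | rfl))
  exacts [Or.inr (Or.inl ⟨_, _, _, rfl⟩), Or.inr (Or.inl ⟨_, _, _, rfl⟩), Or.inl ⟨_, rfl⟩,
    Or.inr (Or.inr ⟨_, _, _, _, rfl⟩)]

end Card

lemma IndependentIn.ncard_le_sSup {S : Type*} [Semigroup S] [Finite S] {A U : Set S}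
    (hUA : U ⊆ A) (hU : IndependentIn U) :
    U.ncard ≤ sSup {k | ∃ V : Set S, V ⊆ A ∧ V.ncard = k ∧ IndependentIn V} :=
  le_csSup ⟨Nat.card S, by rintro k ⟨V, -, rfl, -⟩; exact Set.ncard_le_card V⟩ ⟨U, hUA, rfl, hU⟩

theorem upper_rank_lb_general (n : ℕ) [NeZero n] (hn : 2 ≤ n) (I J : Set (Fin n))
    (hdisj : I ∩ J = ∅)
    (hI : I.ncard = (n + 1) / 2) (hJ : J.ncard = n / 2) :
    let Y : Set (MapBn n) :=
      {f | ∃ i : Fin n, f = nSuppMap n i i 1} ∪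
      {f | ∃ i ∈ I, ∃ j ∈ J, ∃ σ : Equiv.Perm (Fin n), f = nSuppMap n i j σ} ∪
      {constMap n (some (0, 0)), sglMap n 0 0 0 0}
    IndependentIn Y ∧ Y.ncard = n.factorial * (n ^ 2 / 4) + n + 2 ∧
    n.factorial * (n ^ 2 / 4) + n + 2 ≤
      sSup {k | ∃ U : Set (MapBn n), U ⊆ APlus n ∧ U.ncard = k ∧ IndependentIn U} := by
  have : Nontrivial (Fin n) := Fin.nontrivial_iff_two_le.2 hn
  have hIJ : Disjoint I J := Set.disjoint_iff_inter_eq_empty.2 hdisj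
  have hindep : IndependentIn (rankWitness n I J) := independentIn_rankWitness hIJ
  have hcard : (rankWitness n I J).ncard = n.factorial * (n ^ 2 / 4) + n + 2 := by
    rw [ncard_rankWitness hIJ, hI, hJ, Nat.add_one_div_two_mul_div_two]
    ring
  exact ⟨hindep, hcard, hcard ▸ hindep.ncard_le_sSup rankWitness_subset_APlus⟩

theorem upper_rank_lb (n : ℕ) [NeZero n] (hn : 2 ≤ n) (I J : Set (Fin n))
    (hIJ : I ∪ J = Set.univ) (hdisj : I ∩ J = ∅)
    (hI : I.ncard = (n + 1) / 2) (hJ : J.ncard = n / 2) :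
    let Y : Set (MapBn n) :=
      {f | ∃ i : Fin n, f = nSuppMap n i i 1} ∪
      {f | ∃ i ∈ I, ∃ j ∈ J, ∃ σ : Equiv.Perm (Fin n), f = nSuppMap n i j σ} ∪
      {constMap n (some (0, 0)), sglMap n 0 0 0 0}
    IndependentIn Y ∧ Y.ncard = n.factorial * (n ^ 2 / 4) + n + 2 ∧
    n.factorial * (n ^ 2 / 4) + n + 2 ≤
      sSup {k | ∃ U : Set (MapBn n), U ⊆ APlus n ∧ U.ncard = k ∧ IndependentIn U} :=
  upper_rank_lb_general n hn I J hdisj hI hJ
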